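/- arXiv:1902.03050 — 13 statements merged into one kernel-verified Lean document; each statement's English description precedes it below -/
import Mathlib

section
/- Let 𝒞 be a majority category. Suppose given objects G₀, G₁, morphisms d₀, d₁ : G₁ → G₀, a morphism s : G₀ → G₁ with d₀ ∘ s = 1 and d₁ ∘ s = 1, a morphism σ : G₁ → G₁ with d₀ ∘ σ = d₁ and d₁ ∘ σ = d₀, an object G₂ which is the pullback of d₀ along d₁ (object of composable pairs), with pullback projections p₁, p₂ : G₂ → G₁ satisfying d₁ ∘ p₁ = d₀ ∘ p₂, and a morphism m : G₂ → G₁ such that: (i) for every object X and every morphism f : X → G₁, the pair (f, σ ∘ f) is composable (d₁ ∘ f = d₀ ∘ σ ∘ f) and m ∘ ⟨f, σ∘f⟩ = s ∘ d₁ ∘ f, where ⟨f, σ∘f⟩ : X → G₂ is the induced morphism into the pullback; and (ii) composition is right-cancellable: for all f, g, h : X → G₁ with (f,h) and (g,h) composable, m ∘ ⟨f,h⟩ = m ∘ ⟨g,h⟩ implies f = g. (These conditions hold for any internal groupoid in 𝒞.) Then d₀ and d₁ are jointly monomorphic: for all f, g : X → G₁, if d₀∘f = d₀∘g and d₁∘f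 = d₁∘g then f = g; i.e. the internal groupoid is an equivalence relation. -/
open CategoryTheory CategoryTheory.Limits

/-- The triple of morphisms `(a, b, c)` is related by the ternary relation
`(r₁, r₂, r₃)`. -/
def TernaryRelated {C : Type*} [Category C] {R A B D S : C}
    (r₁ : R ⟶ A) (r₂ : R ⟶ B) (r₃ : R ⟶ D) (a : S ⟶ A) (b : S ⟶ B) (c : S ⟶ D) : Prop :=
  ∃ f : S ⟶ R, f ≫ r₁ = a ∧ f ≫ r₂ = b ∧ f ≫ r₃ = c

/-- A category is a majority category when every (jointly monomorphic) internal ternary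
relation is strictly closed with respect to the majority matrix. -/
def IsMajorityCategory (C : Type*) [Category C] : Prop :=
  ∀ ⦃A B D R : C⦄ (r₁ : R ⟶ A) (r₂ : R ⟶ B) (r₃ : R ⟶ D),
    (∀ ⦃S : C⦄ (f g : S ⟶ R),
      f ≫ r₁ = g ≫ r₁ → f ≫ r₂ = g ≫ r₂ → f ≫ r₃ = g ≫ r₃ → f = g) →
    ∀ ⦃S : C⦄ (a₁ a₂ : S ⟶ A) (b₁ b₂ : S ⟶ B) (c₁ c₂ : S ⟶ D),
      TernaryRelated r₁ r₂ r₃ a₁ b₁ c₂ →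
      TernaryRelated r₁ r₂ r₃ a₁ b₂ c₁ →
      TernaryRelated r₁ r₂ r₃ a₂ b₁ c₁ →
      TernaryRelated r₁ r₂ r₃ a₁ b₁ c₁

/-- Every internal groupoid in a majority category is an equivalence relation:
the domain and codomain morphisms are jointly monomorphic. -/
theorem internal_groupoid_is_equivalence_relation
    {C : Type*} [Category C] (hmaj : IsMajorityCategory C)
    {G₀ G₁ G₂ : C} (d₀ d₁ : G₁ ⟶ G₀) (s : G₀ ⟶ G₁) (σ : G₁ ⟶ G₁)
    (hs₀ : s ≫ d₀ = 𝟙 G₀) (hs₁ : s ≫ d₁ = 𝟙 G₀)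
    (hσ₀ : σ ≫ d₀ = d₁) (hσ₁ : σ ≫ d₁ = d₀)
    -- `G₂` is the pullback of `d₀` along `d₁`, with projections `p₁`, `p₂`:
    (p₁ p₂ : G₂ ⟶ G₁) (hp : p₁ ≫ d₁ = p₂ ≫ d₀)
    (pair : ∀ {X : C} (f h : X ⟶ G₁), f ≫ d₁ = h ≫ d₀ → (X ⟶ G₂))
    (hpair₁ : ∀ {X : C} (f h : X ⟶ G₁) (w : f ≫ d₁ = h ≫ d₀), pair f h w ≫ p₁ = f)
    (hpair₂ : ∀ {X : C} (f h : X ⟶ G₁) (w : f ≫ d₁ = h ≫ d₀), pair f h w ≫ p₂ = h)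
    (hjm : ∀ {X : C} (u v : X ⟶ G₂), u ≫ p₁ = v ≫ p₁ → u ≫ p₂ = v ≫ p₂ → u = v)
    (m : G₂ ⟶ G₁)
    -- (i) for every `f`, the pair `(f, σ ∘ f)` is composable and composes to `s ∘ d₁ ∘ f`:
    (hm : ∀ {X : C} (f : X ⟶ G₁) (w : f ≫ d₁ = (f ≫ σ) ≫ d₀),
      pair f (f ≫ σ) w ≫ m = f ≫ d₁ ≫ s)
    -- (ii) composition is right-cancellable:
    (hcancel : ∀ {X : C} (f g h : X ⟶ G₁) (wf : f ≫ d₁ = h ≫ d₀) (wg : g ≫ d₁ = h ≫ d₀),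
      pair f h wf ≫ m = pair g h wg ≫ m → f = g) :
    ∀ {X : C} (f g : X ⟶ G₁), f ≫ d₀ = g ≫ d₀ → f ≫ d₁ = g ≫ d₁ → f = g := by
  intro X f g h0 h1
  have wg : g ≫ d₁ = (g ≫ σ) ≫ d₀ := by rw [Category.assoc, hσ₀]
  have wf : f ≫ d₁ = (g ≫ σ) ≫ d₀ := by rw [h1]; exact wg
  have wff : f ≫ d₁ = (f ≫ σ) ≫ d₀ := by rw [Category.assoc, hσ₀]
  -- apply majority to the relation (p₁, p₂, m)
  have key := hmaj p₁ p₂ m (fun _ u v h1 h2 _ => hjm u v h1 h2) f g (g ≫ σ) (f ≫ σ)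
    (g ≫ d₁ ≫ s) (pair f (g ≫ σ) wf ≫ m)
    ⟨pair f (g ≫ σ) wf, hpair₁ _ _ _, hpair₂ _ _ _, rfl⟩
    ⟨pair f (f ≫ σ) wff, hpair₁ _ _ _, hpair₂ _ _ _, by
      rw [hm f wff]; rw [← Category.assoc, ← Category.assoc, h1]⟩
    ⟨pair g (g ≫ σ) wg, hpair₁ _ _ _, hpair₂ _ _ _, hm g wg⟩
  obtain ⟨u, hu1, hu2, hu3⟩ := key
  have : u = pair f (g ≫ σ) wf := by
    apply hjm <;> simp [hu1, hu2, hpair₁, hpair₂]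
  rw [this] at hu3
  apply hcancel f g (g ≫ σ) wf wg
  rw [hu3, hm g wg]
end

section
/- Let 𝒞 be a pointed (i.e. admitting a zero object) finitely complete majority category. A morphism f : X → Y is central, meaning there exists φ : X × Y → Y with φ ∘ ⟨1_X, 0⟩ = f and φ ∘ ⟨0, 1_Y⟩ = 1_Y, if and only if f is the zero morphism. -/
open CategoryTheory CategoryTheory.Limits

/-!
The graph `{(x, y, φ (x, y))}` of a morphism `φ : X ⨯ Y ⟶ Z` is a ternary relation, so in a
majority category `φ (a₁, b₂) = φ (a₂, b₁)` forces `φ (a₁, b₁) = φ (a₁, b₂)`. For a central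
`f` with witness `φ`, taking `a₁ = 0`, `a₂ = 1`, `b₁ = 0`, `b₂ = f` gives
`φ (0, f) = f = φ (1, 0)`, hence `f = φ (0, 0) = 0`.
-/

section

variable {C : Type*} [Category C] {X Y Z : C} [HasBinaryProduct X Y]

lemma ternaryRelated_prod_graph_iff (φ : X ⨯ Y ⟶ Z) {S : C} (a : S ⟶ X) (b : S ⟶ Y)
    (c : S ⟶ Z) : TernaryRelated prod.fst prod.snd φ a b c ↔ prod.lift a b ≫ φ = c := by
  constructor
  · rintro ⟨g, rfl, rfl, rfl⟩
    rw [← prod.comp_lift, prod.lift_fst_snd, Category.comp_id]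
  · rintro rfl
    exact ⟨prod.lift a b, prod.lift_fst _ _, prod.lift_snd _ _, rfl⟩

lemma IsMajorityCategory.lift_comp_eq_of_lift_comp_eq (hmaj : IsMajorityCategory C)
    (φ : X ⨯ Y ⟶ Z) {S : C} (a₁ a₂ : S ⟶ X) (b₁ b₂ : S ⟶ Y)
    (h : prod.lift a₁ b₂ ≫ φ = prod.lift a₂ b₁ ≫ φ) :
    prod.lift a₁ b₁ ≫ φ = prod.lift a₁ b₂ ≫ φ := by
  have hmono : ∀ ⦃T : C⦄ (g g' : T ⟶ X ⨯ Y), g ≫ prod.fst = g' ≫ prod.fst →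
      g ≫ prod.snd = g' ≫ prod.snd → g ≫ φ = g' ≫ φ → g = g' :=
    fun _ _ _ h₁ h₂ _ => prod.hom_ext h₁ h₂
  rw [← ternaryRelated_prod_graph_iff]
  refine hmaj _ _ _ hmono a₁ a₂ b₁ b₂ _ (prod.lift a₁ b₁ ≫ φ) ?_ ?_ ?_ <;>
    rw [ternaryRelated_prod_graph_iff]
  exact h.symm

end

theorem central_iff_zero_general {C : Type*} [Category C] [HasZeroMorphisms C]
    [HasFiniteLimits C] (hmaj : IsMajorityCategory C) {X Y : C} (f : X ⟶ Y) :
    (∃ φ : X ⨯ Y ⟶ Y, prod.lift (𝟙 X) 0 ≫ φ = f ∧ prod.lift 0 (𝟙 Y) ≫ φ = 𝟙 Y) ↔ f = 0 := by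
  constructor
  · rintro ⟨φ, hfst, hsnd⟩
    have hzero_f : prod.lift 0 f ≫ φ = f := by
      rw [← Category.comp_id f, ← comp_zero (f := f), ← prod.comp_lift, Category.assoc, hsnd]
    have key := hmaj.lift_comp_eq_of_lift_comp_eq φ 0 (𝟙 X) 0 f (hzero_f.trans hfst.symm)
    have hzero_zero : prod.lift (0 : X ⟶ X) (0 : X ⟶ Y) = 0 := by
      ext <;> simp only [prod.lift_fst, prod.lift_snd, zero_comp]
    rw [hzero_f, hzero_zero, zero_comp] at key
    exact key.symm
  · rintro rfl
    exact ⟨prod.snd, prod.lift_snd _ _, prod.lift_snd _ _⟩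

/-- In a pointed finitely complete majority category, a morphism is central
if and only if it is the zero morphism. -/
theorem central_iff_zero {C : Type*} [Category C] [HasZeroObject C] [HasZeroMorphisms C]
    [HasFiniteLimits C] (hmaj : IsMajorityCategory C) {X Y : C} (f : X ⟶ Y) :
    (∃ φ : X ⨯ Y ⟶ Y, prod.lift (𝟙 X) 0 ≫ φ = f ∧ prod.lift 0 (𝟙 Y) ≫ φ = 𝟙 Y) ↔ f = 0 :=
  central_iff_zero_general hmaj f
end

section
/- Let 𝒞 be a pointed (i.e. admitting a zero object) finitely complete majority category, and let f : X → Z and g : Y → Z admit a cooperator, i.e. a morphism φ : X × Y → Z with φ ∘ ⟨1_X, 0⟩ = f and φ ∘ ⟨0, 1_Y⟩ = g. Then the square whose vertex is ker(f) × ker(g), whose two legs are the composite ker(f) × ker(g) → ker(f) → X (first projection followed by the kernel inclusion of f) and the composite ker(f) × ker(g) → ker(g) → Y (second projection followed by the kernel inclusion of g), and whose other two sides are f : X → Z and g : Y → Z, is a pullback square. -/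
open CategoryTheory CategoryTheory.Limits

/-!
The graph of a cooperator `φ` is a ternary relation `(fst, snd, φ)` between `X`, `Y` and `Z`.
If `s ≫ f = t ≫ g`, then `(0, t, s ≫ f)` and `(s, 0, s ≫ f)` lie in it, because `φ` restricts to
`g` and `f` on the axes, and so does `(0, 0, prod.lift 0 0 ≫ φ)`. The majority property then puts
`(0, 0, s ≫ f)` in the relation, forcing `s ≫ f = 0`. So every cone over `f` and `g` lands in
`ker f × ker g`.
-/

section

variable {C : Type*} [Category C]

theorem ternaryRelated_prod_lift {X Y Z S : C} [HasBinaryProduct X Y] (φ : X ⨯ Y ⟶ Z)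
    (a : S ⟶ X) (b : S ⟶ Y) : TernaryRelated prod.fst prod.snd φ a b (prod.lift a b ≫ φ) :=
  ⟨prod.lift a b, prod.lift_fst a b, prod.lift_snd a b, rfl⟩

theorem IsMajorityCategory.comp_eq_zero_of_cooperator [HasZeroMorphisms C]
    (hmaj : IsMajorityCategory C) {X Y Z : C} [HasBinaryProduct X Y] {f : X ⟶ Z} {g : Y ⟶ Z}
    {φ : X ⨯ Y ⟶ Z} (hf : prod.lift (𝟙 X) 0 ≫ φ = f) (hg : prod.lift 0 (𝟙 Y) ≫ φ = g)
    {S : C} {s : S ⟶ X} {t : S ⟶ Y} (hst : s ≫ f = t ≫ g) : s ≫ f = 0 := by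
  have on_first_axis : prod.lift s 0 ≫ φ = s ≫ f := by
    rw [← hf, ← Category.assoc, prod.comp_lift, Category.comp_id, comp_zero]
  have on_second_axis : prod.lift 0 t ≫ φ = t ≫ g := by
    rw [← hg, ← Category.assoc, prod.comp_lift, Category.comp_id, comp_zero]
  have rel_zero_t : TernaryRelated prod.fst prod.snd φ 0 t (s ≫ f) := by
    rw [hst, ← on_second_axis]
    exact ternaryRelated_prod_lift φ 0 t
  have rel_s_zero : TernaryRelated prod.fst prod.snd φ s 0 (s ≫ f) := by
    rw [← on_first_axis]
    exact ternaryRelated_prod_lift φ s 0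
  obtain ⟨w, hw₁, hw₂, hw₃⟩ := hmaj prod.fst prod.snd φ
    (fun _ _ _ h₁ h₂ _ => prod.hom_ext h₁ h₂) 0 s 0 t (s ≫ f) (prod.lift 0 0 ≫ φ)
    (ternaryRelated_prod_lift φ 0 0) rel_zero_t rel_s_zero
  have hw : w = 0 := prod.hom_ext (by rw [hw₁, zero_comp]) (by rw [hw₂, zero_comp])
  rw [← hw₃, hw, zero_comp]

theorem isPullback_prod_kernel_of_comp_eq_zero [HasZeroMorphisms C] {X Y Z : C}
    {f : X ⟶ Z} {g : Y ⟶ Z} [HasKernel f] [HasKernel g] [HasBinaryProduct (kernel f) (kernel g)]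
    (h : ∀ {S : C} (s : S ⟶ X) (t : S ⟶ Y), s ≫ f = t ≫ g → s ≫ f = 0) :
    IsPullback (prod.fst ≫ kernel.ι f) (prod.snd ≫ kernel.ι g) f g := by
  refine IsPullback.of_isLimit (PullbackCone.IsLimit.mk (by simp)
    (fun c => prod.lift (kernel.lift f c.fst (h c.fst c.snd c.condition))
      (kernel.lift g c.snd (c.condition ▸ h c.fst c.snd c.condition)))
    (fun c => by rw [prod.lift_fst_assoc, kernel.lift_ι])
    (fun c => by rw [prod.lift_snd_assoc, kernel.lift_ι]) fun c m hm₁ hm₂ => ?_)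
  refine prod.hom_ext ?_ ?_ <;> refine (cancel_mono (kernel.ι _)).mp ?_
  · rw [Category.assoc, Category.assoc, prod.lift_fst_assoc, kernel.lift_ι, hm₁]
  · rw [Category.assoc, Category.assoc, prod.lift_snd_assoc, kernel.lift_ι, hm₂]

end

theorem cooperator_pullback_general {C : Type*} [Category C] [HasZeroMorphisms C]
    [HasFiniteLimits C] (hmaj : IsMajorityCategory C) {X Y Z : C} (f : X ⟶ Z) (g : Y ⟶ Z)
    (hcoop : ∃ φ : X ⨯ Y ⟶ Z, prod.lift (𝟙 X) 0 ≫ φ = f ∧ prod.lift 0 (𝟙 Y) ≫ φ = g) :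
    IsPullback ((prod.fst : kernel f ⨯ kernel g ⟶ kernel f) ≫ kernel.ι f)
      ((prod.snd : kernel f ⨯ kernel g ⟶ kernel g) ≫ kernel.ι g) f g := by
  obtain ⟨φ, hf, hg⟩ := hcoop
  exact isPullback_prod_kernel_of_comp_eq_zero fun _ _ => hmaj.comp_eq_zero_of_cooperator hf hg

/-- In a pointed finitely complete majority category, if `f : X ⟶ Z` and `g : Y ⟶ Z`
admit a cooperator, then the square with vertex `ker f ⨯ ker g`, legs the composites of
the product projections with the kernel inclusions, and sides `f` and `g`, is a pullback. -/
theorem cooperator_pullback {C : Type*} [Category C] [HasZeroObject C] [HasZeroMorphisms C]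
    [HasFiniteLimits C] (hmaj : IsMajorityCategory C) {X Y Z : C} (f : X ⟶ Z) (g : Y ⟶ Z)
    (hcoop : ∃ φ : X ⨯ Y ⟶ Z, prod.lift (𝟙 X) 0 ≫ φ = f ∧ prod.lift 0 (𝟙 Y) ≫ φ = g) :
    IsPullback ((prod.fst : kernel f ⨯ kernel g ⟶ kernel f) ≫ kernel.ι f)
      ((prod.snd : kernel f ⨯ kernel g ⟶ kernel g) ≫ kernel.ι g) f g :=
  cooperator_pullback_general hmaj f g hcoop
end

section
/- Let 𝒞 be a category with binary products, binary coproducts, and image factorizations (every morphism factors as a strong epimorphism followed by a monomorphism). For an object S, write 2S = S ⊔ S and 3S = S ⊔ S ⊔ S with coprojections ι₁, ι₂ (resp. ι₁, ι₂, ι₃), and let M_S : 3S → (2S) × (2S) × (2S) be the unique morphism whose composites with the three product projections are the copairings [ι₁, ι₁, ι₂], [ι₁, ι₂, ι₁], [ι₂, ι₁, ι₁] : 3S → 2S respectively. Then the following are equivalent: (1) 𝒞 is a majority category; (2) for every object S, writing M_S = r ∘ e with e a strong epimorphism and r a monomorphism, the morphism ⟨ι₁, ι₁, ι₁⟩ :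 S → (2S) × (2S) × (2S) factors through r. -/
open CategoryTheory CategoryTheory.Limits

/-! The majority matrix `M_S` is the generic instance of the majority hypothesis: its three
columns `(ι₁, ι₁, ι₂)`, `(ι₁, ι₂, ι₁)`, `(ι₂, ι₁, ι₁)` lie in its image, and the majority
conclusion for them is that `(ι₁, ι₁, ι₁)` does too. Conversely, three witnesses `f₁, f₂, f₃`
for a relation `ρ` assemble into `[f₁, f₂, f₃] : 3S ⟶ R`, which makes a square from the strong
epimorphic part of `M_S` to the monomorphism `ρ` commute; the diagonal filler carries the
factorization of `(ι₁, ι₁, ι₁)` through the image of `M_S` to a witness for `(a₁, b₁, c₁)`. -/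

section

variable {C : Type*} [Category C]

attribute [local simp] prod.lift_fst prod.lift_snd prod.lift_fst_assoc prod.lift_snd_assoc
  coprod.inl_desc coprod.inr_desc coprod.inl_desc_assoc coprod.inr_desc_assoc

def JointlyMono {R A B D : C} (r₁ : R ⟶ A) (r₂ : R ⟶ B) (r₃ : R ⟶ D) : Prop :=
  ∀ ⦃S : C⦄ (f g : S ⟶ R), f ≫ r₁ = g ≫ r₁ → f ≫ r₂ = g ≫ r₂ → f ≫ r₃ = g ≫ r₃ → f = g

section Products

variable [HasBinaryProducts C]

theorem jointlyMono_iff_mono_lift {R A B D : C} (r₁ : R ⟶ A) (r₂ : R ⟶ B) (r₃ : R ⟶ D) :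
    JointlyMono r₁ r₂ r₃ ↔ Mono (prod.lift r₁ (prod.lift r₂ r₃)) := by
  constructor
  · refine fun h => ⟨fun f g hfg => h f g ?_ ?_ ?_⟩
    · simpa using hfg =≫ prod.fst
    · simpa using hfg =≫ prod.snd ≫ prod.fst
    · simpa using hfg =≫ prod.snd ≫ prod.snd
  · intro _ S f g h₁ h₂ h₃
    rw [← cancel_mono (prod.lift r₁ (prod.lift r₂ r₃))]
    ext <;> simpa

theorem jointlyMono_comp_projections {R A B D : C} (r : R ⟶ A ⨯ (B ⨯ D)) [Mono r] :
    JointlyMono (r ≫ prod.fst) (r ≫ prod.snd ≫ prod.fst) (r ≫ prod.snd ≫ prod.snd) := by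
  rw [jointlyMono_iff_mono_lift]
  convert ‹Mono r›
  ext <;> simp

theorem ternaryRelated_iff_exists_comp_lift {R A B D S : C} (r₁ : R ⟶ A) (r₂ : R ⟶ B)
    (r₃ : R ⟶ D) (a : S ⟶ A) (b : S ⟶ B) (c : S ⟶ D) :
    TernaryRelated r₁ r₂ r₃ a b c ↔
      ∃ f : S ⟶ R, f ≫ prod.lift r₁ (prod.lift r₂ r₃) = prod.lift a (prod.lift b c) := by
  refine exists_congr fun f => ⟨?_, fun h => ⟨?_, ?_, ?_⟩⟩
  · rintro ⟨rfl, rfl, rfl⟩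
    ext <;> simp
  · simpa using h =≫ prod.fst
  · simpa using h =≫ prod.snd ≫ prod.fst
  · simpa using h =≫ prod.snd ≫ prod.snd

theorem ternaryRelated_comp_projections_iff {R A B D S : C} (r : R ⟶ A ⨯ (B ⨯ D))
    (a : S ⟶ A) (b : S ⟶ B) (c : S ⟶ D) :
    TernaryRelated (r ≫ prod.fst) (r ≫ prod.snd ≫ prod.fst) (r ≫ prod.snd ≫ prod.snd) a b c ↔
      ∃ f : S ⟶ R, f ≫ r = prod.lift a (prod.lift b c) := by
  rw [ternaryRelated_iff_exists_comp_lift]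
  convert Iff.rfl using 4
  ext <;> simp

end Products

variable [HasBinaryProducts C] [HasBinaryCoproducts C]

noncomputable def majorityMatrix (S : C) : S ⨿ (S ⨿ S) ⟶ (S ⨿ S) ⨯ ((S ⨿ S) ⨯ (S ⨿ S)) :=
  prod.lift (coprod.desc coprod.inl (coprod.desc coprod.inl coprod.inr))
    (prod.lift (coprod.desc coprod.inl (coprod.desc coprod.inr coprod.inl))
      (coprod.desc coprod.inr (coprod.desc coprod.inl coprod.inl)))

noncomputable def majorityDiagonal (S : C) : S ⟶ (S ⨿ S) ⨯ ((S ⨿ S) ⨯ (S ⨿ S)) :=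
  prod.lift coprod.inl (prod.lift coprod.inl coprod.inl)

theorem majorityMatrix_eq_desc (S : C) :
    majorityMatrix S =
      coprod.desc (prod.lift coprod.inl (prod.lift coprod.inl coprod.inr))
        (coprod.desc (prod.lift coprod.inl (prod.lift coprod.inr coprod.inl))
          (prod.lift coprod.inr (prod.lift coprod.inl coprod.inl))) := by
  ext <;> simp [majorityMatrix]

theorem majorityMatrix_comp_map {S A B D : C} (a₁ a₂ : S ⟶ A) (b₁ b₂ : S ⟶ B) (c₁ c₂ : S ⟶ D) :
    majorityMatrix S ≫
        prod.map (coprod.desc a₁ a₂) (prod.map (coprod.desc b₁ b₂) (coprod.desc c₁ c₂)) =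
      coprod.desc (prod.lift a₁ (prod.lift b₁ c₂))
        (coprod.desc (prod.lift a₁ (prod.lift b₂ c₁)) (prod.lift a₂ (prod.lift b₁ c₁))) := by
  ext <;> simp [majorityMatrix]

theorem majorityDiagonal_comp_map {S A B D : C} (a₁ a₂ : S ⟶ A) (b₁ b₂ : S ⟶ B)
    (c₁ c₂ : S ⟶ D) :
    majorityDiagonal S ≫
        prod.map (coprod.desc a₁ a₂) (prod.map (coprod.desc b₁ b₂) (coprod.desc c₁ c₂)) =
      prod.lift a₁ (prod.lift b₁ c₁) := by
  simp [majorityDiagonal]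

theorem IsMajorityCategory.exists_comp_eq_majorityDiagonal (hC : IsMajorityCategory C)
    {S R : C} (e : S ⨿ (S ⨿ S) ⟶ R) (r : R ⟶ (S ⨿ S) ⨯ ((S ⨿ S) ⨯ (S ⨿ S))) [Mono r]
    (h : e ≫ r = majorityMatrix S) : ∃ f : S ⟶ R, f ≫ r = majorityDiagonal S := by
  have column {T : C} (x : T ⟶ S ⨿ (S ⨿ S)) :
      TernaryRelated (r ≫ prod.fst) (r ≫ prod.snd ≫ prod.fst) (r ≫ prod.snd ≫ prod.snd)
        (x ≫ majorityMatrix S ≫ prod.fst) (x ≫ majorityMatrix S ≫ prod.snd ≫ prod.fst)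
        (x ≫ majorityMatrix S ≫ prod.snd ≫ prod.snd) :=
    (ternaryRelated_comp_projections_iff r _ _ _).2 ⟨x ≫ e, by ext <;> simp [← h]⟩
  have hdiag := hC _ _ _ (jointlyMono_comp_projections r) coprod.inl coprod.inr coprod.inl coprod.inr
    coprod.inl coprod.inr
    (by simpa [majorityMatrix_eq_desc] using column coprod.inl)
    (by simpa [majorityMatrix_eq_desc] using column (coprod.inl ≫ coprod.inr))
    (by simpa [majorityMatrix_eq_desc] using column (coprod.inr ≫ coprod.inr))
  exact (ternaryRelated_comp_projections_iff r _ _ _).1 hdiag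

theorem isMajorityCategory_of_forall_exists_image (hC : ∀ S : C,
    ∃ (I : C) (e : S ⨿ (S ⨿ S) ⟶ I) (m : I ⟶ (S ⨿ S) ⨯ ((S ⨿ S) ⨯ (S ⨿ S))),
      StrongEpi e ∧ e ≫ m = majorityMatrix S ∧ ∃ g : S ⟶ I, g ≫ m = majorityDiagonal S) :
    IsMajorityCategory C := by
  intro A B D R r₁ r₂ r₃ hr S a₁ a₂ b₁ b₂ c₁ c₂ h₁ h₂ h₃
  simp only [ternaryRelated_iff_exists_comp_lift] at h₁ h₂ h₃ ⊢
  obtain ⟨f₁, hf₁⟩ := h₁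
  obtain ⟨f₂, hf₂⟩ := h₂
  obtain ⟨f₃, hf₃⟩ := h₃
  obtain ⟨I, e, m, he, hem, g, hg⟩ := hC S
  have hρ := (jointlyMono_iff_mono_lift r₁ r₂ r₃).1 hr
  set φ := prod.map (coprod.desc a₁ a₂) (prod.map (coprod.desc b₁ b₂) (coprod.desc c₁ c₂))
  have sq : CommSq (coprod.desc f₁ (coprod.desc f₂ f₃)) e (prod.lift r₁ (prod.lift r₂ r₃))
      (m ≫ φ) :=
    ⟨by rw [coprod.desc_comp, coprod.desc_comp, hf₁, hf₂, hf₃, reassoc_of% hem,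
      majorityMatrix_comp_map]⟩
  refine ⟨g ≫ sq.lift, ?_⟩
  rw [Category.assoc, sq.fac_right, reassoc_of% hg, majorityDiagonal_comp_map]

end

/-- Characterization of majority categories with binary products, binary coproducts and
image factorizations: `C` is a majority category iff for every object `S`, the canonical
morphism `⟨ι₁, ι₁, ι₁⟩ : S ⟶ 2S ⨯ 2S ⨯ 2S` factors through the image of the canonical
matrix morphism `M_S : 3S ⟶ 2S ⨯ 2S ⨯ 2S`. -/
theorem majority_iff_image_factorization {C : Type*} [Category C]
    [HasBinaryProducts C] [HasBinaryCoproducts C]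
    (himg : ∀ ⦃X Y : C⦄ (f : X ⟶ Y), ∃ (I : C) (e : X ⟶ I) (m : I ⟶ Y),
      StrongEpi e ∧ Mono m ∧ e ≫ m = f) :
    IsMajorityCategory C ↔
      ∀ (S : C) (R : C) (e : (S ⨿ (S ⨿ S)) ⟶ R) (r : R ⟶ ((S ⨿ S) ⨯ ((S ⨿ S) ⨯ (S ⨿ S)))),
        StrongEpi e → Mono r →
        e ≫ r = prod.lift (coprod.desc coprod.inl (coprod.desc coprod.inl coprod.inr))
            (prod.lift (coprod.desc coprod.inl (coprod.desc coprod.inr coprod.inl))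
              (coprod.desc coprod.inr (coprod.desc coprod.inl coprod.inl))) →
        ∃ f : S ⟶ R, f ≫ r = prod.lift coprod.inl (prod.lift coprod.inl coprod.inl) := by
  refine ⟨fun hC S R e r _ _ h => hC.exists_comp_eq_majorityDiagonal e r h, fun hfac => ?_⟩
  refine isMajorityCategory_of_forall_exists_image fun S => ?_
  obtain ⟨I, e, m, he, hm, hem⟩ := himg (majorityMatrix S)
  exact ⟨I, e, m, he, hem, hfac S I e m he hm hem⟩
end

section
/- If 𝒞 is a finitely complete majority category and 𝒟 is any small category, then the functor category 𝒞^𝒟 (functors 𝒟 → 𝒞 and natural transformations) is a majority category. -/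
/-! Evaluation at an object `d` preserves binary products and monomorphisms, and in a category
with binary products a triple is jointly monic exactly when its lift into `A ⨯ (B ⨯ E)` is mono;
so evaluation sends jointly monic relations in `D ⥤ C` to jointly monic relations in `C`.
The majority property of `C` at each `d` then gives components `S(d) ⟶ R(d)`, and these are
automatically natural since `r₁, r₂, r₃` are jointly monic at every object. -/


open CategoryTheory CategoryTheory.Limits

namespace CategoryTheory

variable {𝒜 : Type*} [Category 𝒜] {ℬ : Type*} [Category ℬ]
variable {R A B E : 𝒜} {r₁ : R ⟶ A} {r₂ : R ⟶ B} {r₃ : R ⟶ E}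

theorem _root_.TernaryRelated.map (F : 𝒜 ⥤ ℬ) {S : 𝒜} {a : S ⟶ A} {b : S ⟶ B} {c : S ⟶ E}
    (h : TernaryRelated r₁ r₂ r₃ a b c) :
    TernaryRelated (F.map r₁) (F.map r₂) (F.map r₃) (F.map a) (F.map b) (F.map c) := by
  obtain ⟨f, rfl, rfl, rfl⟩ := h
  exact ⟨F.map f, (F.map_comp _ _).symm, (F.map_comp _ _).symm, (F.map_comp _ _).symm⟩

def JointlyMono₃ (r₁ : R ⟶ A) (r₂ : R ⟶ B) (r₃ : R ⟶ E) : Prop :=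
  ∀ ⦃S : 𝒜⦄ (f g : S ⟶ R), f ≫ r₁ = g ≫ r₁ → f ≫ r₂ = g ≫ r₂ → f ≫ r₃ = g ≫ r₃ → f = g

theorem Functor.map_prod_hom_ext (F : 𝒜 ⥤ ℬ) {X Y : 𝒜} [HasBinaryProduct X Y]
    [PreservesLimit (pair X Y) F] {W : ℬ} {u v : W ⟶ F.obj (X ⨯ Y)}
    (h₁ : u ≫ F.map prod.fst = v ≫ F.map prod.fst)
    (h₂ : u ≫ F.map prod.snd = v ≫ F.map prod.snd) : u = v :=
  BinaryFan.IsLimit.hom_ext (isLimitOfHasBinaryProductOfPreservesLimit F X Y) h₁ h₂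

theorem JointlyMono₃.mono_lift [HasBinaryProducts 𝒜] (h : JointlyMono₃ r₁ r₂ r₃) :
    Mono (prod.lift r₁ (prod.lift r₂ r₃)) := by
  refine ⟨fun f g hfg => h f g ?_ ?_ ?_⟩
  · simpa only [Category.assoc, prod.lift_fst] using hfg =≫ prod.fst
  · simpa only [Category.assoc, prod.lift_snd_assoc, prod.lift_fst] using
      hfg =≫ prod.snd ≫ prod.fst
  · simpa only [Category.assoc, prod.lift_snd_assoc, prod.lift_snd] using
      hfg =≫ prod.snd ≫ prod.snd

theorem JointlyMono₃.map [HasBinaryProducts 𝒜] (F : 𝒜 ⥤ ℬ)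
    [PreservesLimitsOfShape (Discrete WalkingPair) F] [F.PreservesMonomorphisms]
    (h : JointlyMono₃ r₁ r₂ r₃) : JointlyMono₃ (F.map r₁) (F.map r₂) (F.map r₃) := by
  intro S f g h₁ h₂ h₃
  have := h.mono_lift
  rw [← cancel_mono (F.map (prod.lift r₁ (prod.lift r₂ r₃)))]
  refine F.map_prod_hom_ext ?_ (F.map_prod_hom_ext ?_ ?_) <;>
    simpa only [Category.assoc, ← F.map_comp, prod.lift_fst, prod.lift_snd, prod.lift_snd_assoc]

variable {C : Type*} [Category C] {D : Type*} [Category D]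

theorem ternaryRelated_of_app {R A B E S : D ⥤ C} {r₁ : R ⟶ A} {r₂ : R ⟶ B} {r₃ : R ⟶ E}
    {a : S ⟶ A} {b : S ⟶ B} {c : S ⟶ E}
    (hR : ∀ d, JointlyMono₃ (r₁.app d) (r₂.app d) (r₃.app d))
    (h : ∀ d, TernaryRelated (r₁.app d) (r₂.app d) (r₃.app d) (a.app d) (b.app d) (c.app d)) :
    TernaryRelated r₁ r₂ r₃ a b c := by
  choose f hf₁ hf₂ hf₃ using h
  refine ⟨{ app := f, naturality := fun d d' φ => hR d' _ _ ?_ ?_ ?_ }, ?_, ?_, ?_⟩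
  · simp only [Category.assoc, hf₁, r₁.naturality, reassoc_of% hf₁ d, a.naturality]
  · simp only [Category.assoc, hf₂, r₂.naturality, reassoc_of% hf₂ d, b.naturality]
  · simp only [Category.assoc, hf₃, r₃.naturality, reassoc_of% hf₃ d, c.naturality]
  all_goals ext d; simp [hf₁, hf₂, hf₃]

end CategoryTheory

/-- If `C` is a finitely complete majority category and `D` is a small category,
then the functor category `D ⥤ C` is a majority category. -/
theorem functor_category_majority {C : Type*} [Category C] [HasFiniteLimits C]
    (hmaj : IsMajorityCategory C) (D : Type*) [SmallCategory D] :
    IsMajorityCategory (D ⥤ C) := by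
  intro A B E R r₁ r₂ r₃ hR S a₁ a₂ b₁ b₂ c₁ c₂ h₁ h₂ h₃
  have hR_app d : JointlyMono₃ (r₁.app d) (r₂.app d) (r₃.app d) :=
    JointlyMono₃.map ((evaluation D C).obj d) hR
  refine ternaryRelated_of_app hR_app fun d => ?_
  let ev := (evaluation D C).obj d
  exact hmaj _ _ _ (hR_app d) _ (a₂.app d) _ (b₂.app d) _ (c₂.app d)
    (h₁.map ev) (h₂.map ev) (h₃.map ev)
end

section
/- Let 𝒞 be a category with finite limits and binary coproducts such that both 𝒞 and its opposite category 𝒞^op are majority categories. Then 𝒞 is a preorder: for any objects X, Y and any two morphisms f, g : X → Y, one has f = g. -/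
/-!
Comajority turns the majority property of `𝒞` into an internal majority operation
`Θ : X³ → X` on every object `X`: by majority, the three maps `X² → X³`,
`(a, b) ↦ (a, a, b), (a, b, a), (b, a, a)` are jointly epimorphic, and comajority applied
to this co-relation produces `Θ` from the three projections. Majority applied once more to
the relation `{((x, z), y, Θ (x, y, z))}` then forces any two generalized elements
`e₁, e₂` of `X` to coincide.
-/

open CategoryTheory CategoryTheory.Limits

section

variable {C : Type*} [Category C]

lemma ternaryRelated_op_iff {R A B D S : C} (r₁ : A ⟶ R) (r₂ : B ⟶ R) (r₃ : D ⟶ R)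
    (a : A ⟶ S) (b : B ⟶ S) (c : D ⟶ S) :
    TernaryRelated r₁.op r₂.op r₃.op a.op b.op c.op ↔
      ∃ f : R ⟶ S, r₁ ≫ f = a ∧ r₂ ≫ f = b ∧ r₃ ≫ f = c := by
  constructor
  · rintro ⟨f, h₁, h₂, h₃⟩
    exact ⟨f.unop, congrArg Quiver.Hom.unop h₁, congrArg Quiver.Hom.unop h₂,
      congrArg Quiver.Hom.unop h₃⟩
  · rintro ⟨f, h₁, h₂, h₃⟩
    exact ⟨f.op, by rw [← op_comp, h₁], by rw [← op_comp, h₂], by rw [← op_comp, h₃]⟩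

/- The equalizer `e` of `u` and `v`, read as a relation through `p`, contains the rows
`(p₁, p₂, x ≫ p₃)`, `(p₁, y ≫ p₂, p₃)` and `(z ≫ p₁, p₂, p₃)`; by majority it contains
`(p₁, p₂, p₃)`, i.e. `e` is split epi. -/
theorem IsMajorityCategory.eq_of_comp_eq [HasEqualizers C] (hmaj : IsMajorityCategory C)
    {W A B D T : C} {p₁ : W ⟶ A} {p₂ : W ⟶ B} {p₃ : W ⟶ D}
    (hp : ∀ ⦃S : C⦄ (f g : S ⟶ W),
      f ≫ p₁ = g ≫ p₁ → f ≫ p₂ = g ≫ p₂ → f ≫ p₃ = g ≫ p₃ → f = g)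
    {x y z : W ⟶ W} (hx₁ : x ≫ p₁ = p₁) (hx₂ : x ≫ p₂ = p₂) (hy₁ : y ≫ p₁ = p₁)
    (hy₃ : y ≫ p₃ = p₃) (hz₂ : z ≫ p₂ = p₂) (hz₃ : z ≫ p₃ = p₃)
    {u v : W ⟶ T} (hx : x ≫ u = x ≫ v) (hy : y ≫ u = y ≫ v) (hz : z ≫ u = z ≫ v) :
    u = v := by
  let e := equalizer.ι u v
  have he : ∀ ⦃S : C⦄ (f g : S ⟶ equalizer u v), f ≫ e ≫ p₁ = g ≫ e ≫ p₁ →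
      f ≫ e ≫ p₂ = g ≫ e ≫ p₂ → f ≫ e ≫ p₃ = g ≫ e ≫ p₃ → f = g :=
    fun _ f g h₁ h₂ h₃ => (cancel_mono e).1 (hp _ _
      (by simpa only [Category.assoc] using h₁) (by simpa only [Category.assoc] using h₂)
      (by simpa only [Category.assoc] using h₃))
  have related (t : W ⟶ W) (ht : t ≫ u = t ≫ v) :
      TernaryRelated (e ≫ p₁) (e ≫ p₂) (e ≫ p₃) (t ≫ p₁) (t ≫ p₂) (t ≫ p₃) :=
    ⟨equalizer.lift t ht, by simp [e], by simp [e], by simp [e]⟩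
  obtain ⟨s, hs₁, hs₂, hs₃⟩ := hmaj _ _ _ he p₁ (z ≫ p₁) p₂ (y ≫ p₂) p₃ (x ≫ p₃)
    (by simpa only [hx₁, hx₂] using related x hx)
    (by simpa only [hy₁, hy₃] using related y hy)
    (by simpa only [hz₂, hz₃] using related z hz)
  have hs : s ≫ e = 𝟙 W :=
    hp _ _ (by simpa using hs₁) (by simpa using hs₂) (by simpa using hs₃)
  calc u = s ≫ e ≫ u := by rw [← Category.assoc, hs, Category.id_comp]
    _ = s ≫ e ≫ v := by rw [equalizer.condition]
    _ = v := by rw [← Category.assoc, hs, Category.id_comp]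

variable [HasFiniteProducts C]

attribute [local simp] prod.lift_fst prod.lift_snd prod.lift_fst_assoc prod.lift_snd_assoc

noncomputable abbrev cube (X : C) : C := ∏ᶜ fun _ : Fin 3 => X

noncomputable abbrev cubeLift {S X : C} (a b c : S ⟶ X) : S ⟶ cube X := Pi.lift ![a, b, c]

lemma cube_hom_ext {S X : C} {f g : S ⟶ cube X}
    (h₀ : f ≫ Pi.π _ 0 = g ≫ Pi.π _ 0) (h₁ : f ≫ Pi.π _ 1 = g ≫ Pi.π _ 1)
    (h₂ : f ≫ Pi.π _ 2 = g ≫ Pi.π _ 2) : f = g :=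
  Pi.hom_ext _ _ fun i => by fin_cases i <;> assumption

@[simp]
lemma comp_cubeLift {S S' X : C} (f : S' ⟶ S) (a b c : S ⟶ X) :
    f ≫ cubeLift a b c = cubeLift (f ≫ a) (f ≫ b) (f ≫ c) :=
  cube_hom_ext (by simp) (by simp) (by simp)

lemma IsMajorityCategory.hom_ext_of_cubeLift_comp_eq [HasEqualizers C]
    (hmaj : IsMajorityCategory C) {X T : C} {u v : cube X ⟶ T}
    (haab : cubeLift prod.fst prod.fst prod.snd ≫ u = cubeLift prod.fst prod.fst prod.snd ≫ v)
    (haba : cubeLift prod.fst prod.snd prod.fst ≫ u = cubeLift prod.fst prod.snd prod.fst ≫ v)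
    (hbaa : cubeLift prod.snd prod.fst prod.fst ≫ u = cubeLift prod.snd prod.fst prod.fst ≫ v) :
    u = v := by
  let π : Fin 3 → (cube X ⟶ X) := Pi.π _
  refine hmaj.eq_of_comp_eq (fun _ _ _ => cube_hom_ext)
    (x := prod.lift (π 0) (π 1) ≫ cubeLift prod.fst prod.snd prod.fst)
    (y := prod.lift (π 2) (π 0) ≫ cubeLift prod.snd prod.fst prod.fst)
    (z := prod.lift (π 1) (π 2) ≫ cubeLift prod.fst prod.fst prod.snd)
    ?_ ?_ ?_ ?_ ?_ ?_ (by rw [Category.assoc, Category.assoc, haba])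
    (by rw [Category.assoc, Category.assoc, hbaa]) (by rw [Category.assoc, Category.assoc, haab])
    <;> simp [π]

/-- `Θ (a, a, b) = Θ (a, b, a) = Θ (b, a, a) = a`, stated for the generic pair `(a, b)`. -/
def IsMajorityOperation {X : C} (Θ : cube X ⟶ X) : Prop :=
  cubeLift prod.fst prod.fst prod.snd ≫ Θ = prod.fst ∧
    cubeLift prod.fst prod.snd prod.fst ≫ Θ = prod.fst ∧
    cubeLift prod.snd prod.fst prod.fst ≫ Θ = prod.fst

namespace IsMajorityOperation

variable {X : C} {Θ : cube X ⟶ X} {S : C}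

lemma cubeLift_aab (hΘ : IsMajorityOperation Θ) (a b : S ⟶ X) : cubeLift a a b ≫ Θ = a := by
  simpa only [← Category.assoc, comp_cubeLift, prod.lift_fst, prod.lift_snd] using
    prod.lift a b ≫= hΘ.1

lemma cubeLift_aba (hΘ : IsMajorityOperation Θ) (a b : S ⟶ X) : cubeLift a b a ≫ Θ = a := by
  simpa only [← Category.assoc, comp_cubeLift, prod.lift_fst, prod.lift_snd] using
    prod.lift a b ≫= hΘ.2.1

lemma cubeLift_baa (hΘ : IsMajorityOperation Θ) (a b : S ⟶ X) : cubeLift b a a ≫ Θ = a := by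
  simpa only [← Category.assoc, comp_cubeLift, prod.lift_fst, prod.lift_snd] using
    prod.lift a b ≫= hΘ.2.2

end IsMajorityOperation

theorem IsMajorityCategory.exists_isMajorityOperation [HasEqualizers C]
    (hmaj : IsMajorityCategory C) (hcomaj : IsMajorityCategory Cᵒᵖ) (X : C) :
    ∃ Θ : cube X ⟶ X, IsMajorityOperation Θ := by
  let π : Fin 3 → (cube X ⟶ X) := Pi.π _
  let fst : X ⨯ X ⟶ X := prod.fst
  let snd : X ⨯ X ⟶ X := prod.snd
  exact (ternaryRelated_op_iff ..).1 <|
    hcomaj (cubeLift fst fst snd).op (cubeLift fst snd fst).op (cubeLift snd fst fst).op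
      (fun _ f g h₁ h₂ h₃ => Quiver.Hom.unop_inj (hmaj.hom_ext_of_cubeLift_comp_eq
        (congrArg Quiver.Hom.unop h₁) (congrArg Quiver.Hom.unop h₂)
        (congrArg Quiver.Hom.unop h₃)))
      fst.op snd.op fst.op snd.op fst.op snd.op
      ((ternaryRelated_op_iff ..).2 ⟨π 0, by simp [π, fst, snd], by simp [π, fst, snd],
        by simp [π, fst, snd]⟩)
      ((ternaryRelated_op_iff ..).2 ⟨π 1, by simp [π, fst, snd], by simp [π, fst, snd],
        by simp [π, fst, snd]⟩)
      ((ternaryRelated_op_iff ..).2 ⟨π 2, by simp [π, fst, snd], by simp [π, fst, snd],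
        by simp [π, fst, snd]⟩)

theorem IsMajorityCategory.eq_of_isMajorityOperation (hmaj : IsMajorityCategory C) {X : C}
    {Θ : cube X ⟶ X} (hΘ : IsMajorityOperation Θ) {S : C} (e₁ e₂ : S ⟶ X) : e₁ = e₂ := by
  let π : Fin 3 → (cube X ⟶ X) := Pi.π _
  let π₀₂ : cube X ⟶ X ⨯ X := prod.lift (π 0) (π 2)
  have hmono : ∀ ⦃T : C⦄ (f g : T ⟶ cube X),
      f ≫ π₀₂ = g ≫ π₀₂ → f ≫ π 1 = g ≫ π 1 → f ≫ Θ = g ≫ Θ → f = g :=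
    fun _ f g h₀₂ h₁ _ => cube_hom_ext (by simpa [π₀₂, π] using h₀₂ =≫ prod.fst) h₁
      (by simpa [π₀₂, π] using h₀₂ =≫ prod.snd)
  obtain ⟨w, hw₀₂, hw₁, hwΘ⟩ :=
    hmaj π₀₂ (π 1) Θ hmono (prod.lift e₂ e₁) (prod.lift e₁ e₁) e₂ e₁ e₁ e₂
      ⟨cubeLift e₂ e₂ e₁, by simp [π₀₂, π], by simp [π], hΘ.cubeLift_aab e₂ e₁⟩
      ⟨cubeLift e₂ e₁ e₁, by simp [π₀₂, π], by simp [π], hΘ.cubeLift_baa e₁ e₂⟩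
      ⟨cubeLift e₁ e₂ e₁, by simp [π₀₂, π], by simp [π], hΘ.cubeLift_aba e₁ e₂⟩
  have hw : w = cubeLift e₂ e₂ e₁ := cube_hom_ext
    (by simpa [π₀₂, π] using hw₀₂ =≫ prod.fst) (by simpa [π] using hw₁)
    (by simpa [π₀₂, π] using hw₀₂ =≫ prod.snd)
  rw [← hwΘ, hw, hΘ.cubeLift_aab]

end

theorem majority_and_comajority_preorder_general {C : Type*} [Category C]
    [HasFiniteLimits C]
    (hmaj : IsMajorityCategory C) (hcomaj : IsMajorityCategory Cᵒᵖ) :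
    ∀ {X Y : C} (f g : X ⟶ Y), f = g := by
  intro X Y f g
  obtain ⟨Θ, hΘ⟩ := hmaj.exists_isMajorityOperation hcomaj Y
  exact hmaj.eq_of_isMajorityOperation hΘ f g

/-- A category with finite limits and binary coproducts such that both it and its
opposite are majority categories is a preorder. -/
theorem majority_and_comajority_preorder {C : Type*} [Category C]
    [HasFiniteLimits C] [HasBinaryCoproducts C]
    (hmaj : IsMajorityCategory C) (hcomaj : IsMajorityCategory Cᵒᵖ) :
    ∀ {X Y : C} (f g : X ⟶ Y), f = g :=
  majority_and_comajority_preorder_general hmaj hcomaj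
end

section
/- Let 𝒞 be a finitely complete majority category and A an object of 𝒞. Writing π₁, π₂, π₃ : A × A × A → A for the product projections, the three morphisms ⟨π₁, π₁, π₃⟩, ⟨π₁, π₂, π₂⟩, ⟨π₃, π₂, π₃⟩ : A × A × A → A × A × A are jointly strongly epimorphic; in particular, every monomorphism r : R → A × A × A through which all three of these morphisms factor is an isomorphism. -/
open CategoryTheory CategoryTheory.Limits

section
variable {C : Type*} [Category C] [HasBinaryProducts C]

/-- The first projection `A ⨯ A ⨯ A ⟶ A`. -/
noncomputable def proj₁ (A : C) : A ⨯ (A ⨯ A) ⟶ A := prod.fst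
/-- The second projection `A ⨯ A ⨯ A ⟶ A`. -/
noncomputable def proj₂ (A : C) : A ⨯ (A ⨯ A) ⟶ A := prod.snd ≫ prod.fst
/-- The third projection `A ⨯ A ⨯ A ⟶ A`. -/
noncomputable def proj₃ (A : C) : A ⨯ (A ⨯ A) ⟶ A := prod.snd ≫ prod.snd

/-- The morphism `⟨π₁, π₁, π₃⟩ : A ⨯ A ⨯ A ⟶ A ⨯ A ⨯ A`. -/
noncomputable def m₁ (A : C) : A ⨯ (A ⨯ A) ⟶ A ⨯ (A ⨯ A) :=
  prod.lift (proj₁ A) (prod.lift (proj₁ A) (proj₃ A))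
/-- The morphism `⟨π₁, π₂, π₂⟩ : A ⨯ A ⨯ A ⟶ A ⨯ A ⨯ A`. -/
noncomputable def m₂ (A : C) : A ⨯ (A ⨯ A) ⟶ A ⨯ (A ⨯ A) :=
  prod.lift (proj₁ A) (prod.lift (proj₂ A) (proj₂ A))
/-- The morphism `⟨π₃, π₂, π₃⟩ : A ⨯ A ⨯ A ⟶ A ⨯ A ⨯ A`. -/
noncomputable def m₃ (A : C) : A ⨯ (A ⨯ A) ⟶ A ⨯ (A ⨯ A) :=
  prod.lift (proj₃ A) (prod.lift (proj₂ A) (proj₃ A))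

end


/-!
A monomorphism `r : R ⟶ A ⨯ A ⨯ A` is a ternary relation on `A`. If `⟨π₁,π₁,π₃⟩`, `⟨π₁,π₂,π₂⟩`
and `⟨π₃,π₂,π₃⟩` factor through `r`, then the triples `(π₁,π₁,π₃)`, `(π₁,π₂,π₂)`, `(π₃,π₂,π₃)`
are `R`-related, and the majority property yields that `(π₁,π₂,π₃)` is `R`-related, i.e. `r` is
split epi, hence an isomorphism. Strong epimorphicity follows by applying this to the pullback of
a monomorphism `m` along `v`.
-/

section Products

variable {C : Type*} [Category C] [HasBinaryProducts C] {A S : C}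

@[simp]
lemma lift_lift_comp_proj₁ (a b c : S ⟶ A) : prod.lift a (prod.lift b c) ≫ proj₁ A = a :=
  prod.lift_fst _ _

@[simp]
lemma lift_lift_comp_proj₂ (a b c : S ⟶ A) : prod.lift a (prod.lift b c) ≫ proj₂ A = b := by
  rw [proj₂, prod.lift_snd_assoc, prod.lift_fst]

@[simp]
lemma lift_lift_comp_proj₃ (a b c : S ⟶ A) : prod.lift a (prod.lift b c) ≫ proj₃ A = c := by
  rw [proj₃, prod.lift_snd_assoc, prod.lift_snd]

lemma hom_ext_proj {f g : S ⟶ A ⨯ (A ⨯ A)} (h₁ : f ≫ proj₁ A = g ≫ proj₁ A)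
    (h₂ : f ≫ proj₂ A = g ≫ proj₂ A) (h₃ : f ≫ proj₃ A = g ≫ proj₃ A) : f = g := by
  refine prod.hom_ext h₁ (prod.hom_ext ?_ ?_)
  · simpa [proj₂] using h₂
  · simpa [proj₃] using h₃

lemma ternaryRelated_of_comp_eq_lift {R : C} (r : R ⟶ A ⨯ (A ⨯ A)) {a b c : S ⟶ A}
    (f : S ⟶ R) (hf : f ≫ r = prod.lift a (prod.lift b c)) :
    TernaryRelated (r ≫ proj₁ A) (r ≫ proj₂ A) (r ≫ proj₃ A) a b c :=
  ⟨f, by simp [reassoc_of% hf], by simp [reassoc_of% hf], by simp [reassoc_of% hf]⟩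

lemma jointly_mono_comp_proj {R : C} (r : R ⟶ A ⨯ (A ⨯ A)) [Mono r] ⦃T : C⦄ (f g : T ⟶ R)
    (h₁ : f ≫ r ≫ proj₁ A = g ≫ r ≫ proj₁ A) (h₂ : f ≫ r ≫ proj₂ A = g ≫ r ≫ proj₂ A)
    (h₃ : f ≫ r ≫ proj₃ A = g ≫ r ≫ proj₃ A) : f = g :=
  (cancel_mono r).mp (hom_ext_proj (by simpa using h₁) (by simpa using h₂) (by simpa using h₃))

lemma IsMajorityCategory.isIso_of_mono_of_factors (hmaj : IsMajorityCategory C)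
    {R : C} (r : R ⟶ A ⨯ (A ⨯ A)) [Mono r] (f₁ f₂ f₃ : A ⨯ (A ⨯ A) ⟶ R)
    (hf₁ : f₁ ≫ r = m₁ A) (hf₂ : f₂ ≫ r = m₂ A) (hf₃ : f₃ ≫ r = m₃ A) : IsIso r := by
  obtain ⟨s, hs₁, hs₂, hs₃⟩ :=
    hmaj _ _ _ (jointly_mono_comp_proj r) (proj₁ A) (proj₃ A) (proj₂ A) (proj₁ A) (proj₃ A)
      (proj₂ A) (ternaryRelated_of_comp_eq_lift r f₂ hf₂)
      (ternaryRelated_of_comp_eq_lift r f₁ hf₁) (ternaryRelated_of_comp_eq_lift r f₃ hf₃)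
  have : IsSplitEpi r := ⟨⟨s, hom_ext_proj (by simpa using hs₁) (by simpa using hs₂)
    (by simpa using hs₃)⟩⟩
  exact isIso_of_mono_of_isSplitEpi r

lemma IsMajorityCategory.exists_lift_of_mono [HasPullbacks C] (hmaj : IsMajorityCategory C)
    {P Q : C} (m : P ⟶ Q) [Mono m] {u₁ u₂ u₃ : A ⨯ (A ⨯ A) ⟶ P} {v : A ⨯ (A ⨯ A) ⟶ Q}
    (h₁ : u₁ ≫ m = m₁ A ≫ v) (h₂ : u₂ ≫ m = m₂ A ≫ v) (h₃ : u₃ ≫ m = m₃ A ≫ v) :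
    ∃ t : A ⨯ (A ⨯ A) ⟶ P, t ≫ m = v ∧ m₁ A ≫ t = u₁ ∧ m₂ A ≫ t = u₂ ∧ m₃ A ≫ t = u₃ := by
  have : IsIso (pullback.fst v m) :=
    hmaj.isIso_of_mono_of_factors _ (pullback.lift _ u₁ h₁.symm) (pullback.lift _ u₂ h₂.symm)
      (pullback.lift _ u₃ h₃.symm) (pullback.lift_fst _ _ _) (pullback.lift_fst _ _ _)
      (pullback.lift_fst _ _ _)
  have factor_inv {w : A ⨯ (A ⨯ A) ⟶ A ⨯ (A ⨯ A)} {u : A ⨯ (A ⨯ A) ⟶ P} (h : u ≫ m = w ≫ v) :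
      w ≫ inv (pullback.fst v m) ≫ pullback.snd v m = u := by
    rw [← Category.assoc, (IsIso.comp_inv_eq _).2 (pullback.lift_fst _ _ h.symm).symm,
      pullback.lift_snd]
  exact ⟨inv (pullback.fst v m) ≫ pullback.snd v m, by simp [← pullback.condition],
    factor_inv h₁, factor_inv h₂, factor_inv h₃⟩

end Products

/-- In a finitely complete majority category, the morphisms `⟨π₁,π₁,π₃⟩`, `⟨π₁,π₂,π₂⟩`,
`⟨π₃,π₂,π₃⟩ : A ⨯ A ⨯ A ⟶ A ⨯ A ⨯ A` are jointly strongly epimorphic; in particular every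
monomorphism through which all three factor is an isomorphism. -/
theorem jointly_strongly_epimorphic_triple {C : Type*} [Category C] [HasFiniteLimits C]
    (hmaj : IsMajorityCategory C) (A : C) :
    (∀ ⦃P Q : C⦄ (m : P ⟶ Q), Mono m →
      ∀ (u₁ u₂ u₃ : A ⨯ (A ⨯ A) ⟶ P) (v : A ⨯ (A ⨯ A) ⟶ Q),
        u₁ ≫ m = m₁ A ≫ v → u₂ ≫ m = m₂ A ≫ v → u₃ ≫ m = m₃ A ≫ v →
        ∃ t : A ⨯ (A ⨯ A) ⟶ P, t ≫ m = v ∧ m₁ A ≫ t = u₁ ∧ m₂ A ≫ t = u₂ ∧ m₃ A ≫ t = u₃)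
    ∧
    (∀ ⦃R : C⦄ (r : R ⟶ A ⨯ (A ⨯ A)), Mono r →
      (∃ f₁ : A ⨯ (A ⨯ A) ⟶ R, f₁ ≫ r = m₁ A) →
      (∃ f₂ : A ⨯ (A ⨯ A) ⟶ R, f₂ ≫ r = m₂ A) →
      (∃ f₃ : A ⨯ (A ⨯ A) ⟶ R, f₃ ≫ r = m₃ A) →
      IsIso r) := by
  exact ⟨fun _ _ m _ _ _ _ _ h₁ h₂ h₃ => hmaj.exists_lift_of_mono m h₁ h₂ h₃,
    fun _ r _ ⟨f₁, hf₁⟩ ⟨f₂, hf₂⟩ ⟨f₃, hf₃⟩ => hmaj.isIso_of_mono_of_factors r f₁ f₂ f₃ hf₁ hf₂ hf₃⟩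
end

section
/- Let 𝒞 be a category with finite limits and binary coproducts such that both 𝒞 and 𝒞^op are majority categories. Then for every object A there exists a morphism p_A : A × A × A → A such that: (i) for every object S and all morphisms a, b : S → A, p_A ∘ ⟨a, a, b⟩ = a, p_A ∘ ⟨a, b, a⟩ = a, and p_A ∘ ⟨b, a, a⟩ = a (p_A is an internal majority operation); and (ii) every morphism f : A → B of 𝒞 is a homomorphism for these operations: f ∘ p_A = p_B ∘ (f × f × f). Consequently each hom-set hom(S, A) carries a commutative majority operation given by (a, b, c) ↦ p_A ∘ ⟨a, b, c⟩. -/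
open CategoryTheory CategoryTheory.Limits

/-!
In a majority category the maps `(x, y) ↦ (x, x, y)` and `(x, y) ↦ (x, y, x)` from `A²` to `A³`
are jointly epimorphic: the equalizer of two maps agreeing along them is a relation containing
`(x₁, x₂, x₁)`, `(x₁, x₁, x₃)` and `(x₂, x₂, x₃)`, hence the generic point `(x₁, x₂, x₃)`.
Each projection `A³ ⟶ A` restricts to `fst` along two of the three patterns `(x, x, y)`,
`(x, y, x)`, `(y, x, x)`, so majority in `Cᵒᵖ` glues them to one `p : A³ ⟶ A` restricting to
`fst` along all three. Joint epimorphicity gives naturality, since `p ≫ f` and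
`(f × f × f) ≫ p` both restrict to `fst ≫ f` along the patterns; naturality at the projections
of `A³` and at `p` itself is the interchange law.
-/

attribute [local simp] prod.lift_fst prod.lift_snd prod.lift_fst_assoc prod.lift_snd_assoc

section Patterns

variable {C : Type*} [Category C] [HasBinaryProducts C]

noncomputable abbrev majorityPattern₁ (A : C) : A ⨯ A ⟶ A ⨯ (A ⨯ A) :=
  prod.lift prod.fst (prod.lift prod.fst prod.snd)

noncomputable abbrev majorityPattern₂ (A : C) : A ⨯ A ⟶ A ⨯ (A ⨯ A) :=
  prod.lift prod.fst (prod.lift prod.snd prod.fst)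

noncomputable abbrev majorityPattern₃ (A : C) : A ⨯ A ⟶ A ⨯ (A ⨯ A) :=
  prod.lift prod.snd (prod.lift prod.fst prod.fst)

end Patterns

namespace IsMajorityCategory

variable {C : Type*} [Category C]

section Products

variable [HasBinaryProducts C]

theorem exists_lift_of_mono_s11 (hmaj : IsMajorityCategory C) {A B D E : C}
    (ι : E ⟶ A ⨯ (B ⨯ D)) [Mono ι] {S : C} (a₁ a₂ : S ⟶ A) (b₁ b₂ : S ⟶ B) (c₁ c₂ : S ⟶ D)
    (h₁ : ∃ f, f ≫ ι = prod.lift a₁ (prod.lift b₁ c₂))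
    (h₂ : ∃ f, f ≫ ι = prod.lift a₁ (prod.lift b₂ c₁))
    (h₃ : ∃ f, f ≫ ι = prod.lift a₂ (prod.lift b₁ c₁)) :
    ∃ f, f ≫ ι = prod.lift a₁ (prod.lift b₁ c₁) := by
  have related_iff : ∀ (a : S ⟶ A) (b : S ⟶ B) (c : S ⟶ D),
      TernaryRelated (ι ≫ prod.fst) (ι ≫ prod.snd ≫ prod.fst) (ι ≫ prod.snd ≫ prod.snd) a b c ↔
        ∃ f, f ≫ ι = prod.lift a (prod.lift b c) := by
    refine fun a b c => exists_congr fun f => ⟨fun ⟨ha, hb, hc⟩ => ?_, fun hf => ?_⟩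
    · ext <;> simpa
    · simp [← Category.assoc, hf]
  refine (related_iff _ _ _).1 (hmaj _ _ _ (fun _ f g hf₁ hf₂ hf₃ => ?_) a₁ a₂ b₁ b₂ c₁ c₂
    ((related_iff _ _ _).2 h₁) ((related_iff _ _ _).2 h₂) ((related_iff _ _ _).2 h₃))
  rw [← cancel_mono ι]
  ext <;> simpa

theorem majorityPattern_hom_ext [HasEqualizers C] (hmaj : IsMajorityCategory C) {A T : C}
    (g h : A ⨯ (A ⨯ A) ⟶ T)
    (e₁ : majorityPattern₁ A ≫ g = majorityPattern₁ A ≫ h)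
    (e₂ : majorityPattern₂ A ≫ g = majorityPattern₂ A ≫ h) : g = h := by
  let x₁ : A ⨯ (A ⨯ A) ⟶ A := prod.fst
  let x₂ : A ⨯ (A ⨯ A) ⟶ A := prod.snd ≫ prod.fst
  let x₃ : A ⨯ (A ⨯ A) ⟶ A := prod.snd ≫ prod.snd
  obtain ⟨f, hf⟩ := hmaj.exists_lift_of_mono_s11 (equalizer.ι g h) x₁ x₂ x₂ x₁ x₃ x₁
    ⟨prod.lift x₁ x₂ ≫ equalizer.lift _ e₂, by simp⟩
    ⟨prod.lift x₁ x₃ ≫ equalizer.lift _ e₁, by simp⟩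
    ⟨prod.lift x₂ x₃ ≫ equalizer.lift _ e₁, by simp⟩
  have hf' : f ≫ equalizer.ι g h = 𝟙 _ := by rw [hf]; ext <;> simp [x₁, x₂, x₃]
  calc g = f ≫ equalizer.ι g h ≫ g := by rw [← Category.assoc, hf', Category.id_comp]
    _ = f ≫ equalizer.ι g h ≫ h := by rw [equalizer.condition]
    _ = h := by rw [← Category.assoc, hf', Category.id_comp]

end Products

theorem exists_desc_of_op (hcomaj : IsMajorityCategory Cᵒᵖ) {W X Y Z : C}
    (p₁ : X ⟶ W) (p₂ : Y ⟶ W) (p₃ : Z ⟶ W)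
    (hepi : ∀ ⦃T : C⦄ (f g : W ⟶ T),
      p₁ ≫ f = p₁ ≫ g → p₂ ≫ f = p₂ ≫ g → p₃ ≫ f = p₃ ≫ g → f = g)
    {S : C} (a : X ⟶ S) (b : Y ⟶ S) (c : Z ⟶ S) (s₁ s₂ s₃ : W ⟶ S)
    (h₁a : p₁ ≫ s₁ = a) (h₁b : p₂ ≫ s₁ = b) (h₂a : p₁ ≫ s₂ = a) (h₂c : p₃ ≫ s₂ = c)
    (h₃b : p₂ ≫ s₃ = b) (h₃c : p₃ ≫ s₃ = c) :
    ∃ s : W ⟶ S, p₁ ≫ s = a ∧ p₂ ≫ s = b ∧ p₃ ≫ s = c := by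
  obtain ⟨s, ha, hb, hc⟩ := hcomaj p₁.op p₂.op p₃.op
    (fun _ f g h₁ h₂ h₃ => Quiver.Hom.unop_inj <|
      hepi _ _ (congrArg Quiver.Hom.unop h₁) (congrArg Quiver.Hom.unop h₂)
        (congrArg Quiver.Hom.unop h₃))
    a.op (p₁ ≫ s₃).op b.op (p₂ ≫ s₂).op c.op (p₃ ≫ s₁).op
    ⟨s₁.op, congrArg Quiver.Hom.op h₁a, congrArg Quiver.Hom.op h₁b, rfl⟩
    ⟨s₂.op, congrArg Quiver.Hom.op h₂a, rfl, congrArg Quiver.Hom.op h₂c⟩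
    ⟨s₃.op, rfl, congrArg Quiver.Hom.op h₃b, congrArg Quiver.Hom.op h₃c⟩
  exact ⟨s.unop, Quiver.Hom.op_inj ha, Quiver.Hom.op_inj hb, Quiver.Hom.op_inj hc⟩

end IsMajorityCategory

section InternalMajority

variable {C : Type*} [Category C] [HasBinaryProducts C]

structure IsInternalMajority {A : C} (p : A ⨯ (A ⨯ A) ⟶ A) : Prop where
  pattern₁ : majorityPattern₁ A ≫ p = prod.fst
  pattern₂ : majorityPattern₂ A ≫ p = prod.fst
  pattern₃ : majorityPattern₃ A ≫ p = prod.fst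

theorem IsInternalMajority.lift_eq {A : C} {p : A ⨯ (A ⨯ A) ⟶ A} (hp : IsInternalMajority p)
    {S : C} (a b : S ⟶ A) :
    prod.lift a (prod.lift a b) ≫ p = a ∧
    prod.lift a (prod.lift b a) ≫ p = a ∧
    prod.lift b (prod.lift a a) ≫ p = a := by
  refine ⟨?_, ?_, ?_⟩
  · simpa [← Category.assoc] using prod.lift a b ≫= hp.pattern₁
  · simpa [← Category.assoc] using prod.lift a b ≫= hp.pattern₂
  · simpa [← Category.assoc] using prod.lift a b ≫= hp.pattern₃

theorem majorityPattern_comp_map {A B : C} (f : A ⟶ B) :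
    majorityPattern₁ A ≫ prod.map f (prod.map f f) = prod.map f f ≫ majorityPattern₁ B ∧
    majorityPattern₂ A ≫ prod.map f (prod.map f f) = prod.map f f ≫ majorityPattern₂ B := by
  constructor <;> ext <;> simp

variable [HasEqualizers C]

theorem IsInternalMajority.comp_eq_map_comp (hmaj : IsMajorityCategory C) {A B : C}
    {p : A ⨯ (A ⨯ A) ⟶ A} {q : B ⨯ (B ⨯ B) ⟶ B} (hp : IsInternalMajority p)
    (hq : IsInternalMajority q) (f : A ⟶ B) : p ≫ f = prod.map f (prod.map f f) ≫ q := by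
  obtain ⟨n₁, n₂⟩ := majorityPattern_comp_map f
  refine hmaj.majorityPattern_hom_ext _ _ ?_ ?_
  · rw [reassoc_of% hp.pattern₁, reassoc_of% n₁, hq.pattern₁, prod.map_fst]
  · rw [reassoc_of% hp.pattern₂, reassoc_of% n₂, hq.pattern₂, prod.map_fst]

theorem exists_isInternalMajority (hmaj : IsMajorityCategory C)
    (hcomaj : IsMajorityCategory Cᵒᵖ) (A : C) :
    ∃ p : A ⨯ (A ⨯ A) ⟶ A, IsInternalMajority p := by
  obtain ⟨p, h₁, h₂, h₃⟩ := hcomaj.exists_desc_of_op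
    (majorityPattern₁ A) (majorityPattern₂ A) (majorityPattern₃ A)
    (fun _ f g h₁ h₂ _ => hmaj.majorityPattern_hom_ext f g h₁ h₂)
    prod.fst prod.fst prod.fst prod.fst (prod.snd ≫ prod.fst) (prod.snd ≫ prod.snd)
    (by simp) (by simp) (by simp) (by simp) (by simp) (by simp)
  exact ⟨p, ⟨h₁, h₂, h₃⟩⟩

end InternalMajority

theorem interchange_of_naturality {C : Type*} [Category C] [HasBinaryProducts C]
    (p : ∀ A : C, A ⨯ (A ⨯ A) ⟶ A)
    (hp : ∀ ⦃A B : C⦄ (f : A ⟶ B), p A ≫ f = prod.map f (prod.map f f) ≫ p B)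
    (A : C) {S : C} (a₁ a₂ a₃ b₁ b₂ b₃ c₁ c₂ c₃ : S ⟶ A) :
    prod.lift (prod.lift a₁ (prod.lift a₂ a₃) ≫ p A)
        (prod.lift (prod.lift b₁ (prod.lift b₂ b₃) ≫ p A)
          (prod.lift c₁ (prod.lift c₂ c₃) ≫ p A)) ≫ p A
      = prod.lift (prod.lift a₁ (prod.lift b₁ c₁) ≫ p A)
          (prod.lift (prod.lift a₂ (prod.lift b₂ c₂) ≫ p A)
            (prod.lift a₃ (prod.lift b₃ c₃) ≫ p A)) ≫ p A := by
  have comp_eq : ∀ {X Y : C} (π : X ⟶ Y) (x y z : S ⟶ X),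
      (prod.lift x (prod.lift y z) ≫ p X) ≫ π
        = prod.lift (x ≫ π) (prod.lift (y ≫ π) (z ≫ π)) ≫ p Y := by
    intro X Y π x y z
    rw [Category.assoc, hp, prod.lift_map_assoc, prod.lift_map]
  have coordinatewise :
      prod.lift (prod.lift a₁ (prod.lift a₂ a₃))
          (prod.lift (prod.lift b₁ (prod.lift b₂ b₃)) (prod.lift c₁ (prod.lift c₂ c₃)))
          ≫ p (A ⨯ (A ⨯ A))
        = prod.lift (prod.lift a₁ (prod.lift b₁ c₁) ≫ p A)
            (prod.lift (prod.lift a₂ (prod.lift b₂ c₂) ≫ p A)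
              (prod.lift a₃ (prod.lift b₃ c₃) ≫ p A)) := by
    ext <;> simp [comp_eq]
  rw [← coordinatewise, Category.assoc, hp (p A), prod.lift_map_assoc, prod.lift_map]

theorem internal_commutative_majority_operations_general {C : Type*} [Category C]
    [HasFiniteLimits C]
    (hmaj : IsMajorityCategory C) (hcomaj : IsMajorityCategory Cᵒᵖ) :
    ∃ p : ∀ A : C, (A ⨯ (A ⨯ A)) ⟶ A,
      -- (i) each `p A` is an internal majority operation:
      (∀ (A : C) ⦃S : C⦄ (a b : S ⟶ A),
        prod.lift a (prod.lift a b) ≫ p A = a ∧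
        prod.lift a (prod.lift b a) ≫ p A = a ∧
        prod.lift b (prod.lift a a) ≫ p A = a) ∧
      -- (ii) every morphism of `C` is a homomorphism of internal majority algebras:
      (∀ ⦃A B : C⦄ (f : A ⟶ B), p A ≫ f = prod.map f (prod.map f f) ≫ p B) ∧
      -- consequently, the induced majority operation on each hom-set is commutative:
      (∀ (A : C) ⦃S : C⦄ (a₁ a₂ a₃ b₁ b₂ b₃ c₁ c₂ c₃ : S ⟶ A),
        prod.lift (prod.lift a₁ (prod.lift a₂ a₃) ≫ p A)
          (prod.lift (prod.lift b₁ (prod.lift b₂ b₃) ≫ p A)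
            (prod.lift c₁ (prod.lift c₂ c₃) ≫ p A)) ≫ p A
        = prod.lift (prod.lift a₁ (prod.lift b₁ c₁) ≫ p A)
            (prod.lift (prod.lift a₂ (prod.lift b₂ c₂) ≫ p A)
              (prod.lift a₃ (prod.lift b₃ c₃) ≫ p A)) ≫ p A) := by
  choose p hp using exists_isInternalMajority hmaj hcomaj
  have naturality : ∀ ⦃A B : C⦄ (f : A ⟶ B), p A ≫ f = prod.map f (prod.map f f) ≫ p B :=
    fun A B => (hp A).comp_eq_map_comp hmaj (hp B)
  exact ⟨p, fun A _ => (hp A).lift_eq, naturality, interchange_of_naturality p naturality⟩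

/-- If `C` has finite limits and binary coproducts and both `C` and `Cᵒᵖ` are majority
categories, then every object `A` carries an internal majority operation
`p_A : A ⨯ A ⨯ A ⟶ A`, every morphism is a homomorphism for these operations, and
consequently every hom-set carries a commutative majority operation
`(a, b, c) ↦ ⟨a, b, c⟩ ≫ p_A`. -/
theorem internal_commutative_majority_operations {C : Type*} [Category C]
    [HasFiniteLimits C] [HasBinaryCoproducts C]
    (hmaj : IsMajorityCategory C) (hcomaj : IsMajorityCategory Cᵒᵖ) :
    ∃ p : ∀ A : C, (A ⨯ (A ⨯ A)) ⟶ A,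
      -- (i) each `p A` is an internal majority operation:
      (∀ (A : C) ⦃S : C⦄ (a b : S ⟶ A),
        prod.lift a (prod.lift a b) ≫ p A = a ∧
        prod.lift a (prod.lift b a) ≫ p A = a ∧
        prod.lift b (prod.lift a a) ≫ p A = a) ∧
      -- (ii) every morphism of `C` is a homomorphism of internal majority algebras:
      (∀ ⦃A B : C⦄ (f : A ⟶ B), p A ≫ f = prod.map f (prod.map f f) ≫ p B) ∧
      -- consequently, the induced majority operation on each hom-set is commutative:
      (∀ (A : C) ⦃S : C⦄ (a₁ a₂ a₃ b₁ b₂ b₃ c₁ c₂ c₃ : S ⟶ A),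
        prod.lift (prod.lift a₁ (prod.lift a₂ a₃) ≫ p A)
          (prod.lift (prod.lift b₁ (prod.lift b₂ b₃) ≫ p A)
            (prod.lift c₁ (prod.lift c₂ c₃) ≫ p A)) ≫ p A
        = prod.lift (prod.lift a₁ (prod.lift b₁ c₁) ≫ p A)
            (prod.lift (prod.lift a₂ (prod.lift b₂ c₂) ≫ p A)
              (prod.lift a₃ (prod.lift b₃ c₃) ≫ p A)) ≫ p A) :=
  internal_commutative_majority_operations_general hmaj hcomaj
end

section
/- Every commutative majority algebra has at most one element: if X is a set with a ternary operation p : X × X × X → X satisfying p(x,x,y) = x, p(x,y,x) = x, p(y,x,x) = x for all x, y ∈ X, and p satisfies the interchange law p(p(a₁,a₂,a₃), p(b₁,b₂,b₃), p(c₁,c₂,c₃)) = p(p(a₁,b₁,c₁), p(a₂,b₂,c₂), p(a₃,b₃,c₃)) for all elements a_i, b_i, c_i ∈ X, then any two elements of X are equal. -/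
/-- Every commutative majority algebra has at most one element: if `p` is a majority
operation on `X` satisfying the interchange law, then any two elements of `X` are equal. -/
theorem commutative_majority_algebra_subsingleton {X : Type*} (p : X → X → X → X)
    (h₁ : ∀ x y, p x x y = x) (h₂ : ∀ x y, p x y x = x) (h₃ : ∀ x y, p y x x = x)
    (hcomm : ∀ a₁ a₂ a₃ b₁ b₂ b₃ c₁ c₂ c₃ : X,
      p (p a₁ a₂ a₃) (p b₁ b₂ b₃) (p c₁ c₂ c₃) = p (p a₁ b₁ c₁) (p a₂ b₂ c₂) (p a₃ b₃ c₃))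
    (x y : X) : x = y := by
  have := hcomm x x x x y y y x y
  simpa [h₁, h₂, h₃] using this.symm
end

section
/- Let 𝒞 be a unital category (a pointed category with binary products such that for all objects X, Y the morphisms ⟨1_X, 0⟩ : X → X × Y and ⟨0, 1_Y⟩ : Y → X × Y are jointly strongly epimorphic, so in particular every monomorphism into X × Y through which both factor is an isomorphism) which has binary coproducts, and suppose the opposite category 𝒞^op is a majority category. Then every object of 𝒞 is a zero object; i.e. 𝒞 is equivalent to the terminal category. -/
open CategoryTheory CategoryTheory.Limits

section Unital

variable {C : Type*} [Category C] [HasZeroMorphisms C] [HasBinaryProducts C]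

def JointlyStrongEpiInjections (X Y : C) : Prop :=
  ∀ ⦃P Q : C⦄ (m : P ⟶ Q), Mono m →
    ∀ (u₁ : X ⟶ P) (u₂ : Y ⟶ P) (v : X ⨯ Y ⟶ Q),
      u₁ ≫ m = prod.lift (𝟙 X) 0 ≫ v → u₂ ≫ m = prod.lift 0 (𝟙 Y) ≫ v →
      ∃ t : X ⨯ Y ⟶ P, t ≫ m = v ∧ prod.lift (𝟙 X) 0 ≫ t = u₁ ∧ prod.lift 0 (𝟙 Y) ≫ t = u₂

theorem JointlyStrongEpiInjections.hom_ext {X Y : C} (h : JointlyStrongEpiInjections X Y)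
    {S : C} {f g : X ⨯ Y ⟶ S}
    (h₁ : prod.lift (𝟙 X) 0 ≫ f = prod.lift (𝟙 X) 0 ≫ g)
    (h₂ : prod.lift 0 (𝟙 Y) ≫ f = prod.lift 0 (𝟙 Y) ≫ g) : f = g := by
  -- lift the graph of `g` through the graph of `f`, which is split by `prod.fst`
  have graph_mono : Mono (prod.lift (𝟙 (X ⨯ Y)) f) := mono_of_mono_fac (prod.lift_fst _ _)
  obtain ⟨t, ht, -, -⟩ := h _ graph_mono (prod.lift (𝟙 X) 0) (prod.lift 0 (𝟙 Y))
    (prod.lift (𝟙 (X ⨯ Y)) g) (by ext <;> simp [h₁]) (by ext <;> simp [h₂])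
  have ht_id : t = 𝟙 (X ⨯ Y) := by simpa [prod.lift_fst] using ht =≫ prod.fst
  simpa [ht_id, prod.lift_snd] using ht =≫ prod.snd

end Unital

section Opposite

variable {C : Type*} [Category C]

theorem ternaryRelated_op_iff_s13 {W A B D T : C} (s₁ : A ⟶ W) (s₂ : B ⟶ W) (s₃ : D ⟶ W)
    (a : A ⟶ T) (b : B ⟶ T) (c : D ⟶ T) :
    TernaryRelated s₁.op s₂.op s₃.op a.op b.op c.op ↔
      ∃ f : W ⟶ T, s₁ ≫ f = a ∧ s₂ ≫ f = b ∧ s₃ ≫ f = c := by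
  constructor
  · rintro ⟨f, h₁, h₂, h₃⟩
    exact ⟨f.unop, Quiver.Hom.op_inj h₁, Quiver.Hom.op_inj h₂, Quiver.Hom.op_inj h₃⟩
  · rintro ⟨f, h₁, h₂, h₃⟩
    exact ⟨f.op, congrArg Quiver.Hom.op h₁, congrArg Quiver.Hom.op h₂, congrArg Quiver.Hom.op h₃⟩

theorem IsMajorityCategory.exists_desc_of_op_s13 (hmaj : IsMajorityCategory Cᵒᵖ)
    {W A B D T : C} {s₁ : A ⟶ W} {s₂ : B ⟶ W} {s₃ : D ⟶ W}
    (hs : ∀ ⦃V : C⦄ (f g : W ⟶ V),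
      s₁ ≫ f = s₁ ≫ g → s₂ ≫ f = s₂ ≫ g → s₃ ≫ f = s₃ ≫ g → f = g)
    {a₁ a₂ : A ⟶ T} {b₁ b₂ : B ⟶ T} {c₁ c₂ : D ⟶ T}
    (h₁ : ∃ f : W ⟶ T, s₁ ≫ f = a₁ ∧ s₂ ≫ f = b₁ ∧ s₃ ≫ f = c₂)
    (h₂ : ∃ f : W ⟶ T, s₁ ≫ f = a₁ ∧ s₂ ≫ f = b₂ ∧ s₃ ≫ f = c₁)
    (h₃ : ∃ f : W ⟶ T, s₁ ≫ f = a₂ ∧ s₂ ≫ f = b₁ ∧ s₃ ≫ f = c₁) :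
    ∃ f : W ⟶ T, s₁ ≫ f = a₁ ∧ s₂ ≫ f = b₁ ∧ s₃ ≫ f = c₁ := by
  have hs_op : ∀ ⦃S : Cᵒᵖ⦄ (f g : S ⟶ Opposite.op W),
      f ≫ s₁.op = g ≫ s₁.op → f ≫ s₂.op = g ≫ s₂.op → f ≫ s₃.op = g ≫ s₃.op → f = g :=
    fun _ f g e₁ e₂ e₃ => Quiver.Hom.unop_inj <|
      hs f.unop g.unop (Quiver.Hom.op_inj e₁) (Quiver.Hom.op_inj e₂) (Quiver.Hom.op_inj e₃)
  simp only [← ternaryRelated_op_iff_s13] at h₁ h₂ h₃ ⊢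
  exact hmaj _ _ _ hs_op _ _ _ _ _ _ h₁ h₂ h₃

end Opposite

theorem unital_comajority_trivial_general {C : Type*} [Category C]
    [HasZeroMorphisms C] [HasBinaryProducts C]
    -- `⟨1,0⟩` and `⟨0,1⟩` are jointly strongly epimorphic:
    (hunital : ∀ (X Y : C) ⦃P Q : C⦄ (m : P ⟶ Q), Mono m →
      ∀ (u₁ : X ⟶ P) (u₂ : Y ⟶ P) (v : X ⨯ Y ⟶ Q),
        u₁ ≫ m = prod.lift (𝟙 X) 0 ≫ v → u₂ ≫ m = prod.lift 0 (𝟙 Y) ≫ v →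
        ∃ t : X ⨯ Y ⟶ P, t ≫ m = v ∧ prod.lift (𝟙 X) 0 ≫ t = u₁ ∧ prod.lift 0 (𝟙 Y) ≫ t = u₂)
    (hcomaj : IsMajorityCategory Cᵒᵖ) :
    ∀ X : C, IsZero X := by
  intro X
  have hX : JointlyStrongEpiInjections X X := hunital X X
  obtain ⟨g, hg₁, hg₂, hg_diag⟩ := hcomaj.exists_desc_of_op_s13
    (s₁ := prod.lift (𝟙 X) 0) (s₂ := prod.lift 0 (𝟙 X)) (s₃ := diag X)
    (fun _ _ _ e₁ e₂ _ => hX.hom_ext e₁ e₂)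
    (a₁ := 0) (a₂ := 𝟙 X) (b₁ := 0) (b₂ := 𝟙 X) (c₁ := 𝟙 X) (c₂ := 0)
    ⟨0, by simp⟩ ⟨prod.snd, by simp [prod.lift_snd]⟩ ⟨prod.fst, by simp [prod.lift_fst]⟩
  have hg : g = 0 := hX.hom_ext (by simpa using hg₁) (by simpa using hg₂)
  rw [IsZero.iff_id_eq_zero, ← hg_diag, hg, comp_zero]

/-- A unital category (pointed with binary products, in which `⟨1,0⟩ : X ⟶ X ⨯ Y` and
`⟨0,1⟩ : Y ⟶ X ⨯ Y` are jointly strongly epimorphic) with binary coproducts whose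
opposite category is a majority category is equivalent to the terminal category:
every object is a zero object. -/
theorem unital_comajority_trivial {C : Type*} [Category C]
    [HasZeroObject C] [HasZeroMorphisms C] [HasBinaryProducts C] [HasBinaryCoproducts C]
    -- `⟨1,0⟩` and `⟨0,1⟩` are jointly strongly epimorphic:
    (hunital : ∀ (X Y : C) ⦃P Q : C⦄ (m : P ⟶ Q), Mono m →
      ∀ (u₁ : X ⟶ P) (u₂ : Y ⟶ P) (v : X ⨯ Y ⟶ Q),
        u₁ ≫ m = prod.lift (𝟙 X) 0 ≫ v → u₂ ≫ m = prod.lift 0 (𝟙 Y) ≫ v →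
        ∃ t : X ⨯ Y ⟶ P, t ≫ m = v ∧ prod.lift (𝟙 X) 0 ≫ t = u₁ ∧ prod.lift 0 (𝟙 Y) ≫ t = u₂)
    -- in particular, every monomorphism into `X ⨯ Y` through which both factor is iso:
    (hunital' : ∀ (X Y : C) ⦃R : C⦄ (r : R ⟶ X ⨯ Y), Mono r →
      (∃ u : X ⟶ R, u ≫ r = prod.lift (𝟙 X) 0) →
      (∃ v : Y ⟶ R, v ≫ r = prod.lift 0 (𝟙 Y)) → IsIso r)
    (hcomaj : IsMajorityCategory Cᵒᵖ) :
    ∀ X : C, IsZero X :=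
  unital_comajority_trivial_general hunital hcomaj
end

section
/- Let S be a topological space and let R ⊆ S × S × S be the subspace R = {(x,x,y) : x,y ∈ S} ∪ {(x,y,x) : x,y ∈ S} ∪ {(y,x,x) : x,y ∈ S}, equipped with the subspace topology of the product S × S × S. Then the majority map f : R → S defined by f(x,x,y) = f(x,y,x) = f(y,x,x) = x (explicitly, f(a,b,c) = a if a = b, and otherwise f(a,b,c) = a if a = c, and otherwise f(a,b,c) = b) is continuous. (This shows that Top^op is a comajority category.) -/
/-- The subset `{(x,x,y)} ∪ {(x,y,x)} ∪ {(y,x,x)}` of `S × S × S`. -/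
def majoritySet (S : Type*) : Set (S × S × S) :=
  {p | (∃ x y : S, p = (x, x, y)) ∨ (∃ x y : S, p = (x, y, x)) ∨ (∃ x y : S, p = (y, x, x))}

open Classical in
/-- The majority map: returns the coordinate value occurring at least twice
(`a` if `a = b`, else `a` if `a = c`, else `b`). -/
noncomputable def majorityMap {S : Type*} (p : S × S × S) : S :=
  if p.1 = p.2.1 then p.1 else if p.1 = p.2.2 then p.1 else p.2.1

/-- For any topological space `S`, the majority map on the subspace
`R = {(x,x,y)} ∪ {(x,y,x)} ∪ {(y,x,x)}` of `S × S × S` is continuous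
(hence `Top`ᵒᵖ is a comajority category). -/
theorem majorityMap_continuous (S : Type*) [TopologicalSpace S] :
    Continuous (fun p : majoritySet S => majorityMap (p : S × S × S)) := by
  rw [continuous_def]
  intro U hU
  have key : (fun p : majoritySet S => majorityMap (p : S × S × S)) ⁻¹' U =
      Subtype.val ⁻¹' ((U ×ˢ U ×ˢ (Set.univ : Set S)) ∪ (U ×ˢ (Set.univ : Set S) ×ˢ U)
        ∪ ((Set.univ : Set S) ×ˢ U ×ˢ U)) := by
    ext ⟨q, hq⟩
    simp only [Set.mem_preimage, Set.mem_union, Set.mem_prod, Set.mem_univ, and_true, true_and]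
    rcases hq with ⟨x, y, rfl⟩ | ⟨x, y, rfl⟩ | ⟨x, y, rfl⟩ <;>
      simp only [majorityMap] <;> split_ifs <;> subst_vars <;> tauto
  rw [key]
  exact (IsOpen.union (IsOpen.union (hU.prod (hU.prod isOpen_univ))
    (hU.prod (isOpen_univ.prod hU))) (isOpen_univ.prod (hU.prod hU))).preimage continuous_subtype_val
end

section
/- Let S be a set equipped with a binary relation ρ, and let R = {(x,x,y) : x,y ∈ S} ∪ {(x,y,x) : x,y ∈ S} ∪ {(y,x,x) : x,y ∈ S} ⊆ S × S × S. Then the majority map f : R → S defined by f(x,x,y) = f(x,y,x) = f(y,x,x) = x is monotone with respect to the componentwise relation: for all p = (p₁,p₂,p₃) and q = (q₁,q₂,q₃) in R, if p₁ ρ q₁, p₂ ρ q₂ and p₃ ρ q₃, then f(p) ρ f(q). (This shows that the category Rel₂ of sets with a binary relation and relation-preserving maps is a comajority category.) -/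
/-- For any set `S` with a binary relation `ρ`, the majority map on
`R = {(x,x,y)} ∪ {(x,y,x)} ∪ {(y,x,x)} ⊆ S × S × S` is monotone with respect to the
componentwise relation (hence `Rel₂` is a comajority category). -/
theorem majorityMap_monotone {S : Type*} (ρ : S → S → Prop) :
    ∀ p q : S × S × S, p ∈ majoritySet S → q ∈ majoritySet S →
      ρ p.1 q.1 → ρ p.2.1 q.2.1 → ρ p.2.2 q.2.2 → ρ (majorityMap p) (majorityMap q) := by
  intro p q hp hq h1 h2 h3
  rcases hp with ⟨x, y, rfl⟩ | ⟨x, y, rfl⟩ | ⟨x, y, rfl⟩ <;>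
    rcases hq with ⟨u, v, rfl⟩ | ⟨u, v, rfl⟩ | ⟨u, v, rfl⟩ <;>
    simp only [majorityMap] at * <;> split_ifs <;> simp_all
end

section
/- Let S be an extended metric space (or a metric space), and give S × S × S the supremum (max) product distance. Let R = {(x,x,y) : x,y ∈ S} ∪ {(x,y,x) : x,y ∈ S} ∪ {(y,x,x) : x,y ∈ S} ⊆ S × S × S. Then (i) R is a closed subset of S × S × S, and (ii) the majority map f : R → S defined by f(x,x,y) = f(x,y,x) = f(y,x,x) = x is nonexpansive (1-Lipschitz): dist(f(p), f(q)) ≤ dist(p, q) for all p, q ∈ R. (This shows that the category of (extended) metric spaces with subcontractions is a comajority category.) -/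
lemma majoritySet_eq (S : Type*) :
    majoritySet S = {p : S × S × S | p.1 = p.2.1} ∪ {p | p.1 = p.2.2} ∪ {p | p.2.1 = p.2.2} := by
  ext ⟨a, b, c⟩
  constructor
  · rintro (⟨x, y, h⟩ | ⟨x, y, h⟩ | ⟨x, y, h⟩) <;> simp_all [majoritySet]
  · rintro ((h | h) | h) <;> simp only [Set.mem_setOf_eq] at h <;> subst h
    · exact Or.inl ⟨a, c, rfl⟩
    · exact Or.inr (Or.inl ⟨a, b, rfl⟩)
    · exact Or.inr (Or.inr ⟨b, a, rfl⟩)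

lemma majorityMap_two {S : Type*} {p : S × S × S} (hp : p ∈ majoritySet S) :
    (majorityMap p = p.1 ∧ majorityMap p = p.2.1) ∨
    (majorityMap p = p.1 ∧ majorityMap p = p.2.2) ∨
    (majorityMap p = p.2.1 ∧ majorityMap p = p.2.2) := by
  obtain ⟨x, y, h⟩ | ⟨x, y, h⟩ | ⟨x, y, h⟩ := hp <;> subst h <;>
    simp only [majorityMap] <;> split_ifs <;> simp_all

/-- For any extended metric space `S`, with `S × S × S` carrying the sup (max) distance:
(i) the set `R = {(x,x,y)} ∪ {(x,y,x)} ∪ {(y,x,x)}` is closed in `S × S × S`, and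
(ii) the majority map is nonexpansive on `R` (hence extended metric spaces with
subcontractions form a comajority category). -/
theorem majoritySet_closed_and_majorityMap_nonexpansive (S : Type*) [EMetricSpace S] :
    IsClosed (majoritySet S) ∧
      ∀ p q : S × S × S, p ∈ majoritySet S → q ∈ majoritySet S →
        edist (majorityMap p) (majorityMap q) ≤ edist p q := by
  constructor
  · rw [majoritySet_eq]
    refine ((isClosed_eq continuous_fst (continuous_fst.comp continuous_snd)).union
      (isClosed_eq continuous_fst (continuous_snd.comp continuous_snd))).union
      (isClosed_eq (continuous_fst.comp continuous_snd) (continuous_snd.comp continuous_snd))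
  · intro p q hp hq
    have h1 : edist p.1 q.1 ≤ edist p q := le_max_left _ _
    have h2 : edist p.2.1 q.2.1 ≤ edist p q :=
      le_trans (le_max_left _ _) (le_max_right _ _)
    have h3 : edist p.2.2 q.2.2 ≤ edist p q :=
      le_trans (le_max_right _ _) (le_max_right _ _)
    obtain ⟨e1, e2⟩ | ⟨e1, e2⟩ | ⟨e1, e2⟩ := majorityMap_two hp <;>
      obtain ⟨f1, f2⟩ | ⟨f1, f2⟩ | ⟨f1, f2⟩ := majorityMap_two hq <;>
      first
      | (rw [e1, f1]; exact h1)
      | (rw [e1, f1]; exact h2)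
      | (rw [e2, f2]; exact h2)
      | (rw [e2, f2]; exact h3)
      | (rw [e1, f2]; exact h1)
      | (rw [e2, f1]; exact h3)
      | (rw [e2, f1]; exact h2)
      | (rw [e1, f2]; exact h2)
end
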